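/- Let p > 1, m > 1, a ∈ ℝ, and let w be the homoclinic solution of the core problem. Suppose v : ℝ → ℝ is twice continuously differentiable with v''(y) = −a·w(y)^m for all y, the derivative v' tends to finite limits L₊ as y → +∞ and L₋ as y → −∞, the functions y ↦ w(y)^{p+1}·v(y) and y ↦ w(y)^{p+1}·v'(y) are integrable with w(y)^{p+1}·v(y) → 0 as |y| → ∞, and ∫_ℝ (w^{p+1})'(y)·v(y) dy = 0. Then L₊ + L₋ = 0. -/

import Mathlib

open MeasureTheory Real Filter

/-- The homoclinic solution of the core problem `w'' - w + w^p = 0`. -/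
noncomputable def w (p : ℝ) (y : ℝ) : ℝ :=
  ((p + 1) / 2) ^ (1 / (p - 1)) * (1 / Real.cosh ((p - 1) * y / 2)) ^ (2 / (p - 1))

/-! Since `w` is even, so is `v'' = -a w^m`; hence `v'(y) + v'(-y)` is constant, equal to
`2 v'(0)`, and `L₊ + L₋ = 2 v'(0)`. Integrating the orthogonality relation by parts gives
`∫ w^(p+1) v' = 0`, while pairing `y` with `-y` in the same integral gives
`∫ w^(p+1) v' = v'(0) ∫ w^(p+1)`. As `∫ w^(p+1) > 0`, `v'(0) = 0`. -/

theorem add_comp_neg_eq_two_mul_of_hasDerivAt_even {f f' : ℝ → ℝ}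
    (hf : ∀ x, HasDerivAt f (f' x) x) (heven : ∀ x, f' (-x) = f' x) (x : ℝ) :
    f x + f (-x) = 2 * f 0 := by
  have hderiv : ∀ y, HasDerivAt (fun y => f y + f (-y)) 0 y := fun y => by
    have h := (hf y).add ((hf (-y)).comp y (hasDerivAt_neg y))
    rwa [heven, mul_neg_one, add_neg_cancel] at h
  have hconst := is_const_of_deriv_eq_zero (fun y => (hderiv y).differentiableAt)
    (fun y => (hderiv y).deriv) x 0
  simpa [two_mul] using hconst

theorem add_eq_of_tendsto_of_add_comp_neg_eq {f : ℝ → ℝ} {c Lplus Lminus : ℝ}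
    (hf : ∀ x, f x + f (-x) = c) (hplus : Tendsto f atTop (nhds Lplus))
    (hminus : Tendsto f atBot (nhds Lminus)) : Lplus + Lminus = c :=
  tendsto_nhds_unique (hplus.add (hminus.comp tendsto_neg_atTop_atBot)) (by simp [hf])

theorem integral_mul_eq_of_even_of_add_comp_neg_eq {u f : ℝ → ℝ} {c : ℝ}
    (hu : ∀ x, u (-x) = u x) (hf : ∀ x, f x + f (-x) = 2 * c) (hu_int : Integrable u)
    (huf : Integrable fun x => u x * f x) : ∫ x, u x * f x = c * ∫ x, u x := by
  have hreflect : ∫ x, u x * f x = ∫ x, (2 * c * u x - u x * f x) := by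
    rw [← integral_neg_eq_self]
    congr 1 with x
    rw [hu, ← hf x]
    ring
  rw [integral_sub (hu_int.const_mul _) huf, integral_const_mul] at hreflect
  linarith

theorem inv_cosh_le_two_mul_exp_neg_abs (x : ℝ) : 1 / cosh x ≤ 2 * exp (-|x|) := by
  rw [← cosh_abs, exp_neg, div_le_iff₀ (cosh_pos _), cosh_eq]
  field_simp
  nlinarith [exp_pos (-|x|)]

theorem integrable_exp_neg_mul_abs {b : ℝ} (hb : 0 < b) :
    Integrable fun x : ℝ => exp (-(b * |x|)) := by
  have hIoi : IntegrableOn (fun x : ℝ => exp (-(b * |x|))) (Set.Ioi 0) :=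
    (exp_neg_integrableOn_Ioi 0 hb).congr_fun
      (fun x hx => by simp [abs_of_pos (Set.mem_Ioi.1 hx)]) measurableSet_Ioi
  rw [← integrableOn_univ, ← Set.Iio_union_Ici (a := (0 : ℝ)), integrableOn_union,
    integrableOn_Ici_iff_integrableOn_Ioi]
  refine ⟨?_, hIoi⟩
  rw [← (Measure.measurePreserving_neg (volume : Measure ℝ)).integrableOn_comp_preimage
      (Homeomorph.neg ℝ).measurableEmbedding]
  simpa [Function.comp_def, abs_neg] using hIoi

theorem integrable_inv_cosh_rpow {r : ℝ} (hr : 0 < r) :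
    Integrable fun x : ℝ => (1 / cosh x) ^ r := by
  refine ((integrable_exp_neg_mul_abs hr).const_mul (2 ^ r)).mono'
    ((continuous_const.div continuous_cosh fun x => (cosh_pos x).ne').rpow_const
      fun x => Or.inl (one_div_pos.2 (cosh_pos x)).ne').aestronglyMeasurable
    (ae_of_all _ fun x => ?_)
  have hpos : 0 < 1 / cosh x := one_div_pos.2 (cosh_pos x)
  rw [norm_of_nonneg (rpow_nonneg hpos.le _)]
  calc (1 / cosh x) ^ r ≤ (2 * exp (-|x|)) ^ r :=
        rpow_le_rpow hpos.le (inv_cosh_le_two_mul_exp_neg_abs x) hr.le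
    _ = 2 ^ r * exp (-(r * |x|)) := by
        rw [mul_rpow zero_le_two (exp_nonneg _), ← exp_mul]
        ring_nf

theorem w_neg (p y : ℝ) : w p (-y) = w p y := by
  rw [w, w, mul_neg, neg_div, cosh_neg]

theorem w_pos {p : ℝ} (hp : -1 < p) (y : ℝ) : 0 < w p y :=
  mul_pos (rpow_pos_of_pos (by linarith) _) (rpow_pos_of_pos (one_div_pos.2 (cosh_pos _)) _)

theorem continuous_w (p : ℝ) : Continuous (w p) :=
  continuous_const.mul <| (continuous_const.div (by fun_prop) fun _ => (cosh_pos _).ne').rpow_const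
    fun _ => Or.inl (one_div_pos.2 (cosh_pos _)).ne'

theorem w_rpow_eq {p : ℝ} (hp : -1 < p) (r y : ℝ) :
    w p y ^ r = ((p + 1) / 2) ^ (r / (p - 1)) *
      (1 / cosh ((p - 1) / 2 * y)) ^ (2 * r / (p - 1)) := by
  rw [w, mul_rpow (rpow_nonneg (by linarith) _) (rpow_nonneg (one_div_pos.2 (cosh_pos _)).le _),
    ← rpow_mul (by linarith), ← rpow_mul (one_div_pos.2 (cosh_pos _)).le]
  ring_nf

theorem integrable_w_rpow {p r : ℝ} (hp : 1 < p) (hr : 0 < r) :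
    Integrable fun y => w p y ^ r := by
  simp_rw [w_rpow_eq (by linarith : -1 < p)]
  exact ((integrable_inv_cosh_rpow (div_pos (by positivity) (by linarith))).comp_mul_left'
    (by linarith : (p - 1) / 2 ≠ 0)).const_mul _

theorem integral_w_rpow_pos {p r : ℝ} (hp : 1 < p) (hr : 0 < r) : 0 < ∫ y, w p y ^ r :=
  integral_pos_of_integrable_nonneg_nonzero (x := 0)
    ((continuous_w p).rpow_const fun y => Or.inl (w_pos (by linarith) y).ne')
    (integrable_w_rpow hp hr) (fun y => rpow_nonneg (w_pos (by linarith) y).le r)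
    (rpow_pos_of_pos (w_pos (by linarith) 0) r).ne'

theorem hasDerivAt_w {p : ℝ} (hp : p ≠ 1) (y : ℝ) :
    HasDerivAt (w p) (-tanh ((p - 1) * y / 2) * w p y) y := by
  have hp1 : p - 1 ≠ 0 := sub_ne_zero.2 hp
  set z := (p - 1) * y / 2
  have hc := cosh_pos z
  have hsech : HasDerivAt (fun t => 1 / cosh ((p - 1) * t / 2))
      (-(sinh z * ((p - 1) / 2)) / cosh z ^ 2) y := by
    have hz : HasDerivAt (fun t : ℝ => (p - 1) * t / 2) ((p - 1) / 2) y := by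
      simpa using ((hasDerivAt_id y).const_mul (p - 1)).div_const 2
    simpa [one_div] using hz.cosh.fun_inv hc.ne'
  have hs0 : 1 / cosh z ≠ 0 := (one_div_pos.2 hc).ne'
  refine ((hsech.rpow_const (p := 2 / (p - 1)) (Or.inl hs0)).const_mul
    (((p + 1) / 2) ^ (1 / (p - 1)))).congr_deriv ?_
  rw [rpow_sub_one hs0, tanh_eq_sinh_div_cosh, w]
  field_simp
  ring

theorem hasDerivAt_w_rpow {p : ℝ} (hp : -1 < p) (hp1 : p ≠ 1) (r y : ℝ) :
    HasDerivAt (fun t => w p t ^ r) (-r * tanh ((p - 1) * y / 2) * w p y ^ r) y := by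
  refine ((hasDerivAt_w hp1 y).rpow_const (Or.inl (w_pos hp y).ne')).congr_deriv ?_
  rw [rpow_sub_one (w_pos hp y).ne']
  field_simp [(w_pos hp y).ne']

theorem integrable_deriv_w_rpow_mul {p r : ℝ} (hp : -1 < p) (hp1 : p ≠ 1) {f : ℝ → ℝ}
    (hf : AEStronglyMeasurable f) (h : Integrable fun y => w p y ^ r * f y) :
    Integrable fun y => deriv (fun t => w p t ^ r) y * f y := by
  refine (h.norm.const_mul |r|).mono' ((measurable_deriv _).aestronglyMeasurable.mul hf)
    (ae_of_all _ fun y => ?_)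
  rw [(hasDerivAt_w_rpow hp hp1 r y).deriv, norm_mul, norm_mul, norm_mul, norm_mul, norm_neg,
    ← mul_assoc]
  gcongr
  exact mul_le_of_le_one_right (norm_nonneg r) (abs_tanh_lt_one _).le

theorem balance_condition_general (p m a : ℝ) (hp : 1 < p)
    (v : ℝ → ℝ) (hv : ContDiff ℝ 2 v)
    (hv'' : ∀ y : ℝ, deriv (deriv v) y = -a * (w p y) ^ m)
    (Lplus Lminus : ℝ)
    (hLplus : Tendsto (deriv v) atTop (nhds Lplus))
    (hLminus : Tendsto (deriv v) atBot (nhds Lminus))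
    (hint1 : Integrable (fun y : ℝ => (w p y) ^ (p + 1) * v y))
    (hint2 : Integrable (fun y : ℝ => (w p y) ^ (p + 1) * deriv v y))
    (horth : ∫ y : ℝ, deriv (fun t : ℝ => (w p t) ^ (p + 1)) y * v y = 0) :
    Lplus + Lminus = 0 := by
  have hp₀ : -1 < p := by linarith
  have hv2 : ∀ y, HasDerivAt (deriv v) (-a * w p y ^ m) y := fun y =>
    hv'' y ▸ ((hv.iterate_deriv' 1 1).differentiable one_ne_zero y).hasDerivAt
  have hsym := add_comp_neg_eq_two_mul_of_hasDerivAt_even hv2 fun y => by rw [w_neg]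
  have hibp : ∫ y, w p y ^ (p + 1) * deriv v y = 0 := by
    rw [integral_mul_deriv_eq_deriv_mul_of_integrable
      (fun y _ => ((hasDerivAt_w_rpow hp₀ hp.ne' _ y).differentiableAt).hasDerivAt)
      (fun y _ => ((hv.differentiable two_ne_zero) y).hasDerivAt) hint2
      (integrable_deriv_w_rpow_mul hp₀ hp.ne' hv.continuous.aestronglyMeasurable hint1) hint1,
      horth, neg_zero]
  have hmean := integral_mul_eq_of_even_of_add_comp_neg_eq (fun y => by rw [w_neg]) hsym
    (integrable_w_rpow hp (by linarith)) hint2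
  have hv'0 : deriv v 0 = 0 :=
    (mul_eq_zero.1 (hmean ▸ hibp)).resolve_right (integral_w_rpow_pos hp (by linarith)).ne'
  rw [add_eq_of_tendsto_of_add_comp_neg_eq hsym hLplus hLminus, hv'0, mul_zero]

/-- Balance condition lemma: if `v'' = -a w^m` and `∫ (w^(p+1))' v = 0`, then
`v'(+∞) + v'(-∞) = 0`. -/
theorem balance_condition (p m a : ℝ) (hp : 1 < p) (hm : 1 < m)
    (v : ℝ → ℝ) (hv : ContDiff ℝ 2 v)
    (hv'' : ∀ y : ℝ, deriv (deriv v) y = -a * (w p y) ^ m)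
    (Lplus Lminus : ℝ)
    (hLplus : Tendsto (deriv v) atTop (nhds Lplus))
    (hLminus : Tendsto (deriv v) atBot (nhds Lminus))
    (hint1 : Integrable (fun y : ℝ => (w p y) ^ (p + 1) * v y))
    (hint2 : Integrable (fun y : ℝ => (w p y) ^ (p + 1) * deriv v y))
    (hlim : Tendsto (fun y : ℝ => (w p y) ^ (p + 1) * v y) (cocompact ℝ) (nhds 0))
    (horth : ∫ y : ℝ, deriv (fun t : ℝ => (w p t) ^ (p + 1)) y * v y = 0) :
    Lplus + Lminus = 0 :=
  balance_condition_general p m a hp v hv hv'' Lplus Lminus hLplus hLminus hint1 hint2 horth
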